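/- Let ε > 0. If p_j · (b_j − a_j) ≤ 4ε for every j ∈ {1, …, n}, then sup_{s ∈ (a, b]} |f̃(s) − f_X(s)| ≤ ε; in particular, if p_j · (b_j − a_j) ≤ 8ε for every j ∈ {1, …, n}, then sup_{s ∈ (a, b]} |f̃(s) − f_X(s)| ≤ 2ε. -/

import Mathlib

/-!
Both `f̃(s)` and `f_X(s) = E[min(s, X)]` split over the blocks `I_j`: block `j` contributes
`p_j min(s, μ_j) = min(p_j s, E[X; X ∈ I_j])` to the former and `E[min(s, X); X ∈ I_j]` to the
latter. On a block lying on one side of `s` the function `min(s, ·)` is affine, so the two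
contributions agree, and only the block `I_k ∋ s` is left. There the error is nonnegative by
Jensen's inequality, and bounding `min(s, ·)` from below by its chord over `[a_k, b_k]` caps it by
`p_k (s - a_k)(b_k - s) / (b_k - a_k) ≤ p_k (b_k - a_k) / 4 ≤ ε`.
-/

open MeasureTheory

/-- The `j`-th region of the partition of `ℝ` induced by points `q 0 < q 1 < ⋯ < q n`:
`I_0 = (−∞, q 0]`, `I_j = (q (j−1), q j]` for `1 ≤ j ≤ n`, and `I_{n+1} = (q n, ∞)`. -/
noncomputable def seg (q : ℕ → ℝ) (n j : ℕ) : Set ℝ :=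
  if j = 0 then Set.Iic (q 0)
  else if j ≤ n then Set.Ioc (q (j - 1)) (q j)
  else Set.Ioi (q n)

/-- `p_j = P(X ∈ I_j)`. -/
noncomputable def segProb {Ω : Type*} [MeasurableSpace Ω]
    (P : Measure Ω) (X : Ω → ℝ) (q : ℕ → ℝ) (n j : ℕ) : ℝ :=
  (P {ω | X ω ∈ seg q n j}).toReal

/-- `μ_j = E[X | X ∈ I_j] = E[1_{X ∈ I_j} X] / p_j`. -/
noncomputable def segMean {Ω : Type*} [MeasurableSpace Ω]
    (P : Measure Ω) (X : Ω → ℝ) (q : ℕ → ℝ) (n j : ℕ) : ℝ :=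
  (∫ ω in {ω | X ω ∈ seg q n j}, X ω ∂P) / segProb P X q n j

/-- The induced piecewise linear approximation `f̃(s) = ∑_{j=0}^{n+1} p_j · min(s, μ_j)`. -/
noncomputable def ftilde {Ω : Type*} [MeasurableSpace Ω]
    (P : Measure Ω) (X : Ω → ℝ) (q : ℕ → ℝ) (n : ℕ) (s : ℝ) : ℝ :=
  ∑ j ∈ Finset.range (n + 2), segProb P X q n j * min s (segMean P X q n j)

open Set

section Segments

variable {q : ℕ → ℝ} {n : ℕ}

lemma measurableSet_seg (q : ℕ → ℝ) (n j : ℕ) : MeasurableSet (seg q n j) := by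
  unfold seg; split_ifs
  · exact measurableSet_Iic
  · exact measurableSet_Ioc
  · exact measurableSet_Ioi

lemma seg_zero : seg q n 0 = Iic (q 0) := by simp [seg]

lemma seg_eq_Ioc {j : ℕ} (hj1 : 1 ≤ j) (hjn : j ≤ n) :
    seg q n j = Ioc (q (j - 1)) (q j) := by
  simp [seg, hjn, Nat.one_le_iff_ne_zero.mp hj1]

lemma seg_add_one : seg q n (n + 1) = Ioi (q n) := by simp [seg]

lemma seg_subset_Iic {j : ℕ} (hjn : j ≤ n) : seg q n j ⊆ Iic (q j) := by
  rcases Nat.eq_zero_or_pos j with rfl | hj1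
  · exact seg_zero.subset
  · exact (seg_eq_Ioc hj1 hjn).subset.trans Ioc_subset_Iic_self

lemma seg_subset_Ioi {j : ℕ} (hj1 : 1 ≤ j) (hjn : j ≤ n + 1) :
    seg q n j ⊆ Ioi (q (j - 1)) := by
  rcases hjn.lt_or_eq with hjn | rfl
  · exact (seg_eq_Ioc hj1 (Nat.lt_succ_iff.mp hjn)).subset.trans Ioc_subset_Ioi_self
  · exact seg_add_one.subset

lemma lt_of_mem_seg_of_lt (hq : MonotoneOn q (Iic n)) {i j : ℕ} (hij : i < j) (hjn : j ≤ n + 1)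
    {x y : ℝ} (hx : x ∈ seg q n i) (hy : y ∈ seg q n j) : x < y :=
  calc x ≤ q i := seg_subset_Iic (by omega) hx
    _ ≤ q (j - 1) := hq (mem_Iic.mpr (by omega)) (mem_Iic.mpr (by omega)) (by omega)
    _ < y := seg_subset_Ioi (by omega) hjn hy

lemma pairwiseDisjoint_seg (hq : MonotoneOn q (Iic n)) :
    (Finset.range (n + 2) : Set ℕ).PairwiseDisjoint (seg q n) := by
  intro i hi j hj hij
  simp only [Finset.coe_range, mem_Iio] at hi hj
  rw [Function.onFun, Set.disjoint_left]
  intro x hxi hxj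
  rcases hij.lt_or_gt with h | h
  · exact (lt_of_mem_seg_of_lt hq h (by omega) hxi hxj).false
  · exact (lt_of_mem_seg_of_lt hq h (by omega) hxj hxi).false

/-- The segment containing `x` is the first `j` with `x ≤ q j`, or `n + 1` if there is none. -/
lemma exists_mem_seg (x : ℝ) : ∃ j < n + 2, x ∈ seg q n j := by
  classical
  have hex : ∃ j, n < j ∨ x ≤ q j := ⟨n + 1, Or.inl n.lt_succ_self⟩
  obtain ⟨k, hk, hk_le, hmin⟩ : ∃ k, (n < k ∨ x ≤ q k) ∧ k ≤ n + 1 ∧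
      ∀ m < k, ¬(n < m ∨ x ≤ q m) :=
    ⟨_, Nat.find_spec hex, Nat.find_min' hex (Or.inl n.lt_succ_self),
      fun m hm => Nat.find_min hex hm⟩
  refine ⟨k, by omega, ?_⟩
  rcases Nat.eq_zero_or_pos k with rfl | hk1
  · exact seg_zero ▸ hk.resolve_left (Nat.not_lt_zero n)
  have hprev := hmin (k - 1) (by omega)
  push Not at hprev
  rcases hk_le.lt_or_eq with hkn | rfl
  · rw [seg_eq_Ioc hk1 (by omega)]
    exact ⟨hprev.2, hk.resolve_left (by omega)⟩
  · exact seg_add_one ▸ hprev.2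

lemma biUnion_seg : ⋃ j ∈ Finset.range (n + 2), seg q n j = univ :=
  eq_univ_of_forall fun x => by
    obtain ⟨j, hj, hx⟩ := exists_mem_seg (q := q) (n := n) x
    exact mem_biUnion (Finset.mem_coe.mpr (Finset.mem_range.mpr hj)) hx

end Segments

lemma integral_eq_sum_setIntegral_of_biUnion_eq_univ {Ω ι : Type*} [MeasurableSpace Ω]
    {P : Measure Ω} {g : Ω → ℝ} (hg : Integrable g P) {t : Finset ι} {A : ι → Set Ω}
    (hA : ∀ i ∈ t, NullMeasurableSet (A i) P) (hdisj : (t : Set ι).PairwiseDisjoint A)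
    (hcover : ⋃ i ∈ t, A i = univ) :
    ∫ ω, g ω ∂P = ∑ i ∈ t, ∫ ω in A i, g ω ∂P :=
  calc ∫ ω, g ω ∂P = ∫ ω, (⋃ i ∈ t, A i).indicator g ω ∂P := by rw [hcover, indicator_univ]
    _ = ∫ ω, ∑ i ∈ t, (A i).indicator g ω ∂P := by rw [Finset.indicator_biUnion _ _ hdisj]
    _ = ∑ i ∈ t, ∫ ω, (A i).indicator g ω ∂P :=
      integral_finsetSum _ fun i hi => hg.indicator₀ (hA i hi)
    _ = ∑ i ∈ t, ∫ ω in A i, g ω ∂P :=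
      Finset.sum_congr rfl fun i hi => integral_indicator₀ (hA i hi)

/-- The error of a block of mass `p`, on which `ftilde` puts `p · min(s, (∫ X) / p)`
(see `measureReal_univ_mul_min_div`) in place of `∫ min(s, X)`. -/
noncomputable def minGap {Ω : Type*} [MeasurableSpace Ω] (ν : Measure Ω) (X : Ω → ℝ) (s : ℝ) :
    ℝ :=
  min (ν.real univ * s) (∫ ω, X ω ∂ν) - ∫ ω, min s (X ω) ∂ν

section MinGap

variable {Ω : Type*} [MeasurableSpace Ω] {ν : Measure Ω} [IsFiniteMeasure ν] {X : Ω → ℝ}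
  {s : ℝ}

lemma integrable_min_const (hX : Integrable X ν) : Integrable (fun ω => min s (X ω)) ν :=
  (integrable_const s).inf hX

lemma measureReal_univ_mul_min_div :
    ν.real univ * min s ((∫ ω, X ω ∂ν) / ν.real univ) =
      min (ν.real univ * s) (∫ ω, X ω ∂ν) := by
  rw [mul_min_of_nonneg _ _ measureReal_nonneg]
  rcases eq_zero_or_neZero ν with rfl | _
  · simp
  · rw [mul_div_cancel₀ _ measureReal_univ_ne_zero]

lemma minGap_eq_zero_of_ae_le (hX : Integrable X ν) (h : ∀ᵐ ω ∂ν, X ω ≤ s) :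
    minGap ν X s = 0 := by
  have hle : ∫ ω, X ω ∂ν ≤ ν.real univ * s := by
    simpa [integral_const] using integral_mono_ae hX (integrable_const s) h
  rw [minGap, min_eq_right hle, integral_congr_ae (h.mono fun ω => min_eq_right), sub_self]

lemma minGap_eq_zero_of_ae_ge (hX : Integrable X ν) (h : ∀ᵐ ω ∂ν, s ≤ X ω) :
    minGap ν X s = 0 := by
  have hge : ν.real univ * s ≤ ∫ ω, X ω ∂ν := by
    simpa [integral_const, mul_comm] using integral_mono_ae (integrable_const s) hX h
  rw [minGap, min_eq_left hge, integral_congr_ae (h.mono fun ω => min_eq_left), integral_const,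
    smul_eq_mul, sub_self]

lemma minGap_nonneg (hX : Integrable X ν) : 0 ≤ minGap ν X s := by
  have hs : ∫ ω, min s (X ω) ∂ν ≤ ν.real univ * s := by
    simpa [integral_const, mul_comm] using
      integral_mono (integrable_min_const hX) (integrable_const s) fun ω => min_le_left s (X ω)
  have hX' : ∫ ω, min s (X ω) ∂ν ≤ ∫ ω, X ω ∂ν :=
    integral_mono (integrable_min_const hX) hX fun ω => min_le_right s (X ω)
  exact sub_nonneg.mpr (le_min hs hX')

/-- On `[u, v]` the concave function `min s` lies above its chord through `(u, u)` and `(v, s)`;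
integrating this chord bound leaves at most `(s - u)(v - s) ≤ (v - u)² / 4` per unit mass. -/
lemma minGap_le (hX : Integrable X ν) {u v : ℝ} (huv : u < v) (hs : s ∈ Icc u v)
    (hXuv : ∀ᵐ ω ∂ν, X ω ∈ Icc u v) : minGap ν X s ≤ ν.real univ * (v - u) / 4 := by
  set p := ν.real univ
  set J := ∫ ω, X ω ∂ν
  set I := ∫ ω, min s (X ω) ∂ν
  obtain ⟨hus, hsv⟩ := hs
  have hJu : p * u ≤ J := by
    simpa [p, integral_const, mul_comm] using
      integral_mono_ae (integrable_const u) hX (hXuv.mono fun ω h => h.1)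
  have hJv : J ≤ p * v := by
    simpa [p, integral_const, mul_comm] using
      integral_mono_ae hX (integrable_const v) (hXuv.mono fun ω h => h.2)
  have hchord : (s - u) * J + (v - s) * (p * u) ≤ (v - u) * I := by
    have hpt : ∀ᵐ ω ∂ν, (s - u) * X ω + (v - s) * u ≤ (v - u) * min s (X ω) := by
      filter_upwards [hXuv] with ω ⟨hxu, hxv⟩
      rcases le_total s (X ω) with h | h
      · rw [min_eq_left h]; nlinarith
      · rw [min_eq_right h]; nlinarith
    have hint : ∫ ω, ((s - u) * X ω + (v - s) * u) ∂ν ≤ ∫ ω, (v - u) * min s (X ω) ∂ν :=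
      integral_mono_ae ((hX.const_mul _).add (integrable_const _))
        ((integrable_min_const hX).const_mul _) hpt
    rw [integral_add (hX.const_mul _) (integrable_const _), integral_const_mul,
      integral_const_mul (v - u), integral_const, smul_eq_mul] at hint
    linarith
  have hmin : (v - u) * min (p * s) J ≤
      (s - u) * J + (v - s) * (p * u) + p * ((s - u) * (v - s)) := by
    rcases le_total (p * s) J with h | h
    · rw [min_eq_left h]; nlinarith
    · rw [min_eq_right h]; nlinarith
  have hamgm : (s - u) * (v - s) ≤ (v - u) ^ 2 / 4 := by nlinarith [sq_nonneg (2 * s - u - v)]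
  have hp : 0 ≤ p := measureReal_nonneg
  refine le_of_mul_le_mul_left ?_ (sub_pos.mpr huv)
  calc (v - u) * minGap ν X s = (v - u) * min (p * s) J - (v - u) * I := mul_sub _ _ _
    _ ≤ p * ((s - u) * (v - s)) := by linarith
    _ ≤ p * ((v - u) ^ 2 / 4) := mul_le_mul_of_nonneg_left hamgm hp
    _ = (v - u) * (p * (v - u) / 4) := by ring

lemma abs_minGap_le (hX : Integrable X ν) {u v : ℝ} (huv : u < v) (hs : s ∈ Icc u v)
    (hXuv : ∀ᵐ ω ∂ν, X ω ∈ Icc u v) : |minGap ν X s| ≤ ν.real univ * (v - u) / 4 := by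
  rw [abs_of_nonneg (minGap_nonneg hX)]
  exact minGap_le hX huv hs hXuv

end MinGap

section Approximation

variable {Ω : Type*} [MeasurableSpace Ω] {P : Measure Ω} {X : Ω → ℝ} {q : ℕ → ℝ} {n : ℕ}

lemma measureReal_restrict_preimage_seg (j : ℕ) :
    (P.restrict (X ⁻¹' seg q n j)).real univ = segProb P X q n j :=
  measureReal_restrict_apply_univ _

lemma ae_restrict_preimage_seg (hX : AEMeasurable X P) (j : ℕ) :
    ∀ᵐ ω ∂P.restrict (X ⁻¹' seg q n j), X ω ∈ seg q n j :=
  ae_restrict_mem₀ (hX.nullMeasurableSet_preimage (measurableSet_seg q n j))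

lemma ftilde_sub_integral_eq_sum_minGap [IsFiniteMeasure P] (hX : Integrable X P)
    (hq : MonotoneOn q (Iic n)) (s : ℝ) : ftilde P X q n s - ∫ ω, min s (X ω) ∂P =
      ∑ j ∈ Finset.range (n + 2), minGap (P.restrict (X ⁻¹' seg q n j)) X s := by
  rw [integral_eq_sum_setIntegral_of_biUnion_eq_univ (integrable_min_const hX)
      (fun j _ => hX.aemeasurable.nullMeasurableSet_preimage (measurableSet_seg q n j))
      (fun i hi j hj hij => (pairwiseDisjoint_seg hq hi hj hij).preimage X)
      (by rw [← preimage_iUnion₂, biUnion_seg, preimage_univ]),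
    ftilde, ← Finset.sum_sub_distrib]
  refine Finset.sum_congr rfl fun j _ => ?_
  rw [minGap, ← measureReal_univ_mul_min_div, measureReal_restrict_preimage_seg]
  rfl

/-- Only the block containing `s` contributes: on every other block `X` stays on one side of `s`,
where `min s` is affine. -/
lemma abs_ftilde_sub_integral_le [IsFiniteMeasure P] (hX : Integrable X P)
    (hq : MonotoneOn q (Iic n)) {ε : ℝ}
    (hblock : ∀ j, 1 ≤ j → j ≤ n → segProb P X q n j * (q j - q (j - 1)) ≤ 4 * ε)
    {s : ℝ} (hs : s ∈ Ioc (q 0) (q n)) : |ftilde P X q n s - ∫ ω, min s (X ω) ∂P| ≤ ε := by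
  obtain ⟨k, hk, hsk⟩ := exists_mem_seg (q := q) (n := n) s
  have hk1 : 1 ≤ k := Nat.one_le_iff_ne_zero.mpr fun h => by
    subst h; rw [seg_zero] at hsk; exact hs.1.not_ge hsk
  have hkn : k ≤ n := Nat.le_of_lt_succ <| (Nat.le_of_lt_succ hk).lt_of_ne fun h => by
    subst h; rw [seg_add_one] at hsk; exact hs.2.not_gt hsk
  have hae := ae_restrict_preimage_seg hX.aemeasurable (q := q) (n := n)
  rw [ftilde_sub_integral_eq_sum_minGap hX hq,
    Finset.sum_eq_single_of_mem k (Finset.mem_range.mpr hk)]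
  · rw [seg_eq_Ioc hk1 hkn] at hsk
    calc _ ≤ segProb P X q n k * (q k - q (k - 1)) / 4 := by
          rw [← measureReal_restrict_preimage_seg]
          exact abs_minGap_le hX.restrict (hsk.1.trans_le hsk.2) (Ioc_subset_Icc_self hsk)
            ((hae k).mono fun ω h => Ioc_subset_Icc_self (by rwa [seg_eq_Ioc hk1 hkn] at h))
      _ ≤ ε := by linarith [hblock k hk1 hkn]
  · intro j hj hjk
    rw [Finset.mem_range] at hj
    rcases hjk.lt_or_gt with h | h
    · exact minGap_eq_zero_of_ae_le hX.restrict
        ((hae j).mono fun ω hω => (lt_of_mem_seg_of_lt hq h (by omega) hω hsk).le)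
    · exact minGap_eq_zero_of_ae_ge hX.restrict
        ((hae j).mono fun ω hω => (lt_of_mem_seg_of_lt hq h (by omega) hsk hω).le)

end Approximation

theorem error_bounds_from_interval_bounds_general {Ω : Type*} [MeasurableSpace Ω]
    (P : Measure Ω) [IsProbabilityMeasure P]
    (X : Ω → ℝ) (hX : Integrable X P)
    (a b : ℝ) (n : ℕ)
    (q : ℕ → ℝ) (hq0 : q 0 = a) (hqn : q n = b)
    (hmono : ∀ i < n, q i < q (i + 1))
    (ε : ℝ) :
    ((∀ j, 1 ≤ j → j ≤ n → segProb P X q n j * (q j - q (j - 1)) ≤ 4 * ε) →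
        ∀ s ∈ Set.Ioc a b, |ftilde P X q n s - ∫ ω, min s (X ω) ∂P| ≤ ε) ∧
      ((∀ j, 1 ≤ j → j ≤ n → segProb P X q n j * (q j - q (j - 1)) ≤ 8 * ε) →
        ∀ s ∈ Set.Ioc a b, |ftilde P X q n s - ∫ ω, min s (X ω) ∂P| ≤ 2 * ε) := by
  have hq : MonotoneOn q (Iic n) :=
    monotoneOn_of_le_add_one ordConnected_Iic fun i _ _ hi => (hmono i hi).le
  subst hq0 hqn
  refine ⟨fun h4 s hs => abs_ftilde_sub_integral_le hX hq h4 hs,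
    fun h8 s hs => abs_ftilde_sub_integral_le hX hq (fun j h1 h2 => ?_) hs⟩
  linarith [h8 j h1 h2]

/-- Let `ε > 0`. If `p_j (b_j − a_j) ≤ 4ε` for every `j ∈ {1,…,n}`,
then `sup_{s ∈ (a,b]} |f̃(s) − f_X(s)| ≤ ε`; in particular, if `p_j (b_j − a_j) ≤ 8ε`
for every `j ∈ {1,…,n}`, then `sup_{s ∈ (a,b]} |f̃(s) − f_X(s)| ≤ 2ε`. -/
theorem error_bounds_from_interval_bounds {Ω : Type*} [MeasurableSpace Ω]
    (P : Measure Ω) [IsProbabilityMeasure P]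
    (X : Ω → ℝ) (hX : Integrable X P)
    (a b : ℝ) (hab : a < b) (n : ℕ) (hn : 1 ≤ n)
    (q : ℕ → ℝ) (hq0 : q 0 = a) (hqn : q n = b)
    (hmono : ∀ i < n, q i < q (i + 1))
    (hpos : ∀ j ≤ n + 1, 0 < segProb P X q n j)
    (ε : ℝ) (hε : 0 < ε) :
    ((∀ j, 1 ≤ j → j ≤ n → segProb P X q n j * (q j - q (j - 1)) ≤ 4 * ε) →
        ∀ s ∈ Set.Ioc a b, |ftilde P X q n s - ∫ ω, min s (X ω) ∂P| ≤ ε) ∧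
      ((∀ j, 1 ≤ j → j ≤ n → segProb P X q n j * (q j - q (j - 1)) ≤ 8 * ε) →
        ∀ s ∈ Set.Ioc a b, |ftilde P X q n s - ∫ ω, min s (X ω) ∂P| ≤ 2 * ε) :=
  error_bounds_from_interval_bounds_general P X hX a b n q hq0 hqn hmono ε
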